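/- If a list L of clause encodings over n variables has length m, and k₂ clauses in L are repeats (i.e., the number of distinct encodings is m − k₂), and m − k₂ < 2^n, then the SSAT instance L is satisfiable. -/
import Mathlib

/-- If a list `L` of `m` clause encodings has `m - k₂` distinct encodings and
`m - k₂ < 2^n`, the instance is satisfiable. -/
theorem stmt_16 (n m k₂ : ℕ) (L : List (Fin n → Bool))
    (hlen : L.length = m) (hdist : L.toFinset.card = m - k₂)
    (h : m - k₂ < 2 ^ n) :
    ∃ a : Fin n → Bool, ∀ c ∈ L, ∃ i : Fin n, a i = c i := by
  have hcard : (L.toFinset.image (fun c (i : Fin n) => !c i)).card < 2 ^ n :=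
    lt_of_le_of_lt (Finset.card_image_le.trans (le_of_eq hdist)) h
  have hfull : (L.toFinset.image (fun c (i : Fin n) => !c i)).card < Fintype.card (Fin n → Bool) := by
    simpa [Fintype.card_fun] using hcard
  have hne := (Finset.card_lt_iff_ne_univ _).mp hfull
  have hex : ∃ a, a ∉ L.toFinset.image (fun c (i : Fin n) => !c i) := by
    by_contra hcon
    push_neg at hcon
    exact hne (Finset.eq_univ_iff_forall.mpr hcon)
  obtain ⟨a, ha⟩ := hex
  refine ⟨a, fun c hc => ?_⟩
  by_contra hcon
  push_neg at hcon
  apply ha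
  refine Finset.mem_image.mpr ⟨c, List.mem_toFinset.mpr hc, ?_⟩
  funext i
  cases hci : c i <;> simpa [hci] using hcon i
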